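/- Define φ(t₁, t₂) = (1/9)(4 + 2t₁ + 2t₂ + t₁t₂)(4 - 2t₁ - 2t₂) on the domain D = { (t₁,t₂) ∈ [-1,1]² : t₁ ≤ 0 or t₂ ≤ 0 }. Then min over D of φ = 8/9 and max over D of φ = 16/9. -/
import Mathlib


open Set

def D : Set (ℝ × ℝ) :=
  {t : ℝ × ℝ | t.1 ∈ Icc (-1 : ℝ) 1 ∧ t.2 ∈ Icc (-1 : ℝ) 1 ∧ (t.1 ≤ 0 ∨ t.2 ≤ 0)}

noncomputable def φ (t : ℝ × ℝ) : ℝ :=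
  1/9 * (4 + 2*t.1 + 2*t.2 + t.1*t.2) * (4 - 2*t.1 - 2*t.2)

lemma auxφ (a b : ℝ) (ha1 : -1 ≤ a) (ha2 : a ≤ 1) (hb1 : -1 ≤ b) (hb2 : b ≤ 1) (ha0 : a ≤ 0) :
    8 ≤ (4 + 2*a + 2*b + a*b) * (4 - 2*a - 2*b) ∧
    (4 + 2*a + 2*b + a*b) * (4 - 2*a - 2*b) ≤ 16 := by
  constructor
  · nlinarith [mul_nonneg (sub_nonneg.2 ha2) (sub_nonneg.2 hb2), mul_nonneg (neg_nonneg.2 ha0) (sub_nonneg.2 hb2), mul_nonneg (by linarith : (0:ℝ) ≤ a+1) (by linarith : (0:ℝ) ≤ b+1), mul_nonneg (neg_nonneg.2 ha0) (by linarith : (0:ℝ) ≤ b+1), sq_nonneg (a+b), sq_nonneg (a-b), sq_nonneg (a*b), mul_nonneg (mul_nonneg (neg_nonneg.2 ha0) (by linarith : (0:ℝ) ≤ b+1)) (sub_nonneg.2 hb2)]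
  · nlinarith [sq_nonneg (a+b), sq_nonneg (a*b), mul_nonneg (neg_nonneg.2 ha0) (sub_nonneg.2 hb2), mul_nonneg (neg_nonneg.2 ha0) (by linarith : (0:ℝ) ≤ b+1), sq_nonneg (a-b), sq_nonneg (2+a+b)]

lemma φ_bounds {t : ℝ × ℝ} (ht : t ∈ D) : 8/9 ≤ φ t ∧ φ t ≤ 16/9 := by
  obtain ⟨⟨ha1, ha2⟩, ⟨hb1, hb2⟩, h0⟩ := ht
  rcases h0 with h0 | h0
  · have := auxφ t.1 t.2 ha1 ha2 hb1 hb2 h0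
    unfold φ; constructor <;> linarith [this.1, this.2]
  · have := auxφ t.2 t.1 hb1 hb2 ha1 ha2 h0
    unfold φ; constructor <;> nlinarith [this.1, this.2]

/-- On D, φ has minimum 8/9 and maximum 16/9. -/
theorem stmt12 :
    IsLeast (φ '' D) (8/9) ∧ IsGreatest (φ '' D) (16/9) := by
  constructor
  · constructor
    · exact ⟨((-1 : ℝ), (-1 : ℝ)), ⟨⟨le_refl _, by norm_num⟩, ⟨le_refl _, by norm_num⟩, Or.inl (by norm_num)⟩, by norm_num [φ]⟩
    · rintro x ⟨t, ht, rfl⟩; exact (φ_bounds ht).1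
  · constructor
    · exact ⟨((0 : ℝ), (0 : ℝ)), ⟨⟨by norm_num, by norm_num⟩, ⟨by norm_num, by norm_num⟩, Or.inl le_rfl⟩, by norm_num [φ]⟩
    · rintro x ⟨t, ht, rfl⟩; exact (φ_bounds ht).2
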